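/- Fix ρ > 0 and ε ∈ [0,1). Let X, Y be random variables on countable sets, and consider variable-length codes 𝒞 = ((φ_y, ψ_y, C_y))_{y} with common side-information Y at encoder and decoder, where each codeword set C_y ⊂ {0,1}* is prefix-free, φ_y : 𝒳 → C_y may be stochastic with channel W_{φ_y}(c|x), and ψ_y : C_y → 𝒳. If the error probability p_e(𝒞) = ∑_{x,y} P_{XY}(x,y) ∑_{c : x ≠ ψ_y(c)} W_{φ_y}(c|x) satisfies p_e(𝒞) ≤ ε, then the exponential moment M_ρ = ∑_{x,y} P_{XY}(x,y) ∑_{c ∈ C_y} W_{φ_y}(c|x) exp(ρ |c| log 2) satisfies M_ρ ≥ exp{ ρ · H_{1/(1+ρ)}^ε(X|Y) }. -/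

import Mathlib

open Classical

/-- Kraft inequality for finite prefix-free sets of binary strings. -/
theorem kraft_finset : ∀ (n : ℕ) (S : Finset (List Bool)),
    (∀ c1 ∈ S, ∀ c2 ∈ S, c1 <+: c2 → c1 = c2) → (∀ c ∈ S, c.length ≤ n) →
    ∑ c ∈ S, ((2:ℝ)⁻¹) ^ c.length ≤ 1 := by
  intro n
  induction n with
  | zero =>
    intro S hpre hlen
    have : S ⊆ {([] : List Bool)} := by
      intro c hc
      simp [List.length_eq_zero_iff.mp (Nat.le_zero.mp (hlen c hc))]
    calc ∑ c ∈ S, ((2:ℝ)⁻¹) ^ c.length ≤ ∑ c ∈ ({([] : List Bool)} : Finset _), ((2:ℝ)⁻¹) ^ c.length := by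
          apply Finset.sum_le_sum_of_subset_of_nonneg this
          intro i _ _; positivity
      _ = 1 := by simp
  | succ n ih =>
    intro S hpre hlen
    by_cases hnil : ([] : List Bool) ∈ S
    · have : S ⊆ {([] : List Bool)} := by
        intro c hc
        have := hpre [] hnil c hc (List.nil_prefix)
        simp [← this]
      calc ∑ c ∈ S, ((2:ℝ)⁻¹) ^ c.length ≤ ∑ c ∈ ({([] : List Bool)} : Finset _), ((2:ℝ)⁻¹) ^ c.length := by
            apply Finset.sum_le_sum_of_subset_of_nonneg this
            intro i _ _; positivity
        _ = 1 := by simp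
    · -- split by head
      have key : ∀ b : Bool, ∑ c ∈ S.filter (fun c => c.head? = some b), ((2:ℝ)⁻¹) ^ c.length
          ≤ (2:ℝ)⁻¹ := by
        intro b
        set Sb := S.filter (fun c => c.head? = some b) with hSb
        have hmem : ∀ c ∈ Sb, c = b :: c.tail := by
          intro c hc
          rcases Finset.mem_filter.mp hc with ⟨hcS, hh⟩
          cases c with
          | nil => simp at hh
          | cons a t => simp at hh; simp [hh]
        have hinj : ∀ c1 ∈ Sb, ∀ c2 ∈ Sb, c1.tail = c2.tail → c1 = c2 := by
          intro c1 h1 c2 h2 ht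
          rw [hmem c1 h1, hmem c2 h2, ht]
        have himage := Finset.sum_image (f := fun t : List Bool => ((2:ℝ)⁻¹) ^ t.length)
          (g := List.tail) (s := Sb) hinj
        have himg : ∑ c ∈ Sb, ((2:ℝ)⁻¹) ^ c.length
            = (2:ℝ)⁻¹ * ∑ t ∈ Sb.image List.tail, ((2:ℝ)⁻¹) ^ t.length := by
          rw [himage, Finset.mul_sum]
          apply Finset.sum_congr rfl
          intro c hc
          conv_lhs => rw [hmem c hc]
          rw [List.length_cons]
          ring
        rw [himg]
        have hT : ∑ t ∈ Sb.image List.tail, ((2:ℝ)⁻¹) ^ t.length ≤ 1 := by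
          apply ih
          · intro t1 ht1 t2 ht2 hpref
            rcases Finset.mem_image.mp ht1 with ⟨c1, hc1, rfl⟩
            rcases Finset.mem_image.mp ht2 with ⟨c2, hc2, rfl⟩
            have h1 : c1 = b :: c1.tail := hmem c1 hc1
            have h2 : c2 = b :: c2.tail := hmem c2 hc2
            have : c1 <+: c2 := by
              rw [h1, h2]
              exact List.cons_prefix_cons.mpr ⟨rfl, hpref⟩
            have := hpre c1 (Finset.mem_filter.mp hc1).1 c2 (Finset.mem_filter.mp hc2).1 this
            rw [this]
          · intro t ht
            rcases Finset.mem_image.mp ht with ⟨c, hc, rfl⟩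
            have h1 : c = b :: c.tail := hmem c hc
            have := hlen c (Finset.mem_filter.mp hc).1
            rw [h1] at this
            simpa using this
        nlinarith [hT]
      have hsplit : S = (S.filter (fun c => c.head? = some false)) ∪ (S.filter (fun c => c.head? = some true)) := by
        ext c
        simp only [Finset.mem_union, Finset.mem_filter]
        constructor
        · intro hc
          cases c with
          | nil => exact absurd hc hnil
          | cons a t =>
            cases a
            · exact Or.inl ⟨hc, rfl⟩
            · exact Or.inr ⟨hc, rfl⟩
        · rintro (⟨h, _⟩ | ⟨h, _⟩) <;> exact h
      have hdisj : Disjoint (S.filter (fun c => c.head? = some false)) (S.filter (fun c => c.head? = some true)) := by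
        rw [Finset.disjoint_left]
        intro c hc1 hc2
        have h1 := (Finset.mem_filter.mp hc1).2
        have h2 := (Finset.mem_filter.mp hc2).2
        rw [h1] at h2
        simp at h2
      calc ∑ c ∈ S, ((2:ℝ)⁻¹) ^ c.length
          = ∑ c ∈ S.filter (fun c => c.head? = some false), ((2:ℝ)⁻¹) ^ c.length
            + ∑ c ∈ S.filter (fun c => c.head? = some true), ((2:ℝ)⁻¹) ^ c.length := by
            conv_lhs => rw [hsplit]
            rw [Finset.sum_union hdisj]
        _ ≤ (2:ℝ)⁻¹ + (2:ℝ)⁻¹ := add_le_add (key false) (key true)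
        _ = 1 := by norm_num


lemma holder_tsum {ι : Type*} (u v : ι → ℝ) (hu0 : ∀ i, 0 ≤ u i) (hv0 : ∀ i, 0 ≤ v i)
    (hu : Summable u) (hv : Summable v) {α : ℝ} (hα : 0 < α) (hα1 : α < 1) :
    Summable (fun i => u i ^ α * v i ^ (1-α)) ∧
    ∑' i, u i ^ α * v i ^ (1-α) ≤ (∑' i, u i) ^ α * (∑' i, v i) ^ (1-α) := by
  set U := ∑' i, u i with hU
  set V := ∑' i, v i with hV
  have hU0 : 0 ≤ U := tsum_nonneg hu0
  have hV0 : 0 ≤ V := tsum_nonneg hv0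
  have hle : ∀ i, u i ≤ U := fun i => Summable.le_tsum hu i (fun j _ => hu0 j)
  have hlev : ∀ i, v i ≤ V := fun i => Summable.le_tsum hv i (fun j _ => hv0 j)
  by_cases hUz : U = 0
  · have hu_eq : ∀ i, u i = 0 := fun i => le_antisymm (hUz ▸ hle i) (hu0 i)
    have : (fun i => u i ^ α * v i ^ (1-α)) = fun _ => 0 := by
      funext i; rw [hu_eq i, Real.zero_rpow hα.ne', zero_mul]
    constructor
    · rw [this]; exact summable_zero
    · rw [this, tsum_zero, hUz, Real.zero_rpow hα.ne', zero_mul]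
  by_cases hVz : V = 0
  · have hv_eq : ∀ i, v i = 0 := fun i => le_antisymm (hVz ▸ hlev i) (hv0 i)
    have : (fun i => u i ^ α * v i ^ (1-α)) = fun _ => 0 := by
      funext i; rw [hv_eq i, Real.zero_rpow (by linarith), mul_zero]
    constructor
    · rw [this]; exact summable_zero
    · rw [this, tsum_zero, hVz, Real.zero_rpow (by linarith), mul_zero]
  have hUp : 0 < U := lt_of_le_of_ne hU0 (Ne.symm hUz)
  have hVp : 0 < V := lt_of_le_of_ne hV0 (Ne.symm hVz)
  have key : ∀ i, u i ^ α * v i ^ (1-α)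
      ≤ U ^ α * V ^ (1-α) * (α * (u i / U) + (1-α) * (v i / V)) := by
    intro i
    have hdu : 0 ≤ u i / U := div_nonneg (hu0 i) hU0
    have hdv : 0 ≤ v i / V := div_nonneg (hv0 i) hV0
    have young := Real.geom_mean_le_arith_mean2_weighted hα.le (by linarith : (0:ℝ) ≤ 1 - α)
      hdu hdv (by ring)
    have hrw : u i ^ α * v i ^ (1-α)
        = U ^ α * V ^ (1-α) * ((u i / U) ^ α * (v i / V) ^ (1-α)) := by
      rw [Real.div_rpow (hu0 i) hU0, Real.div_rpow (hv0 i) hV0]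
      field_simp
    rw [hrw]
    have hfac : 0 ≤ U ^ α * V ^ (1-α) := by positivity
    exact mul_le_mul_of_nonneg_left young hfac
  have hbig : Summable (fun i => U ^ α * V ^ (1-α) * (α * (u i / U) + (1-α) * (v i / V))) := by
    apply Summable.mul_left
    apply Summable.add
    · exact ((hu.div_const U).mul_left α)
    · exact ((hv.div_const V).mul_left (1-α))
  have hnn : ∀ i, 0 ≤ u i ^ α * v i ^ (1-α) := by
    intro i; exact mul_nonneg (Real.rpow_nonneg (hu0 i) _) (Real.rpow_nonneg (hv0 i) _)
  have hsumm : Summable (fun i => u i ^ α * v i ^ (1-α)) :=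
    Summable.of_nonneg_of_le hnn key hbig
  refine ⟨hsumm, ?_⟩
  calc ∑' i, u i ^ α * v i ^ (1-α)
      ≤ ∑' i, U ^ α * V ^ (1-α) * (α * (u i / U) + (1-α) * (v i / V)) :=
        Summable.tsum_le_tsum key hsumm hbig
    _ = U ^ α * V ^ (1-α) * (α * (U / U) + (1-α) * (V / V)) := by
        rw [tsum_mul_left]
        congr 1
        rw [Summable.tsum_add ((hu.div_const U).mul_left α) ((hv.div_const V).mul_left (1-α)),
          tsum_mul_left, tsum_mul_left]
        congr 1 <;> rw [tsum_div_const]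
    _ = U ^ α * V ^ (1-α) := by
        rw [div_self hUz, div_self hVz]; ring

lemma tsum_le_rpow_tsum_rpow {ι : Type*} (q : ι → ℝ) (h0 : ∀ i, 0 ≤ q i) (hq : Summable q)
    {α : ℝ} (hα : 0 < α) (hα1 : α < 1) (hqa : Summable (fun i => q i ^ α)) :
    ∑' i, q i ≤ (∑' i, q i ^ α) ^ (1/α) := by
  set A := ∑' i, q i ^ α with hA
  have hA0 : 0 ≤ A := tsum_nonneg (fun i => Real.rpow_nonneg (h0 i) α)
  have hle : ∀ i, q i ^ α ≤ A := fun i => Summable.le_tsum hqa i (fun j _ => Real.rpow_nonneg (h0 j) α)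
  by_cases hAz : A = 0
  · have hz : ∀ i, q i = 0 := by
      intro i
      have h1 : q i ^ α = 0 := le_antisymm (hAz ▸ hle i) (Real.rpow_nonneg (h0 i) α)
      rcases (Real.rpow_eq_zero (h0 i) hα.ne').mp h1 with h
      exact h
    have : (fun i => q i) = fun _ => 0 := funext hz
    rw [this, tsum_zero, hAz, Real.zero_rpow (by positivity : (1/α) ≠ 0)]
  have hAp : 0 < A := lt_of_le_of_ne hA0 (Ne.symm hAz)
  have key : ∀ i, q i ≤ q i ^ α * A ^ ((1-α)/α) := by
    intro i
    have e0 : α * ((1-α)/α) = 1 - α := by field_simp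
    have e1 : α + (1-α) = 1 := by ring
    have h1 : q i ^ α * (q i ^ α) ^ ((1-α)/α) = q i := by
      calc q i ^ α * (q i ^ α) ^ ((1-α)/α) = q i ^ α * q i ^ (1-α) := by
            rw [← Real.rpow_mul (h0 i), e0]
        _ = q i ^ (α + (1-α)) := (Real.rpow_add' (h0 i) (by rw [e1]; norm_num)).symm
        _ = q i := by rw [e1, Real.rpow_one]
    calc q i = q i ^ α * (q i ^ α) ^ ((1-α)/α) := h1.symm
      _ ≤ q i ^ α * A ^ ((1-α)/α) := by
          apply mul_le_mul_of_nonneg_left _ (Real.rpow_nonneg (h0 i) α)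
          exact Real.rpow_le_rpow (Real.rpow_nonneg (h0 i) α) (hle i)
            (div_nonneg (by linarith) hα.le)
  calc ∑' i, q i ≤ ∑' i, q i ^ α * A ^ ((1-α)/α) :=
        Summable.tsum_le_tsum key hq (hqa.mul_right _)
    _ = A * A ^ ((1-α)/α) := by rw [tsum_mul_right]
    _ = A ^ (1/α) := by
        nth_rewrite 1 [← Real.rpow_one A]
        rw [← Real.rpow_add hAp]
        congr 1
        field_simp
        ring

/-- Iterated sums from product summability, for nonnegative functions. -/
lemma iterated_of_prod {X Y : Type} (f : X → Y → ℝ) (h0 : ∀ x y, 0 ≤ f x y)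
    (hf : Summable (fun xy : X × Y => f xy.1 xy.2)) :
    (∀ y, Summable fun x => f x y) ∧ (Summable fun y => ∑' x, f x y) ∧
    ∑' y, ∑' x, f x y = ∑' xy : X × Y, f xy.1 xy.2 := by
  have hg : Summable (fun p : Y × X => f p.2 p.1) := by
    have := ((Equiv.prodComm Y X).summable_iff (f := fun xy : X × Y => f xy.1 xy.2)).mpr hf
    exact this
  have hinner : ∀ y, Summable fun x => f x y := fun y => hg.prod_factor y
  have houter : Summable fun y => ∑' x, f x y := by
    have := (summable_prod_of_nonneg (f := fun p : Y × X => f p.2 p.1)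
      (fun p => h0 p.2 p.1)).mp hg
    exact this.2
  refine ⟨hinner, houter, ?_⟩
  rw [← Summable.tsum_prod' hg (fun y => hinner y)]
  exact (Equiv.prodComm Y X).tsum_eq (fun xy : X × Y => f xy.1 xy.2)


/-- Conditional ε-smooth Rényi entropy, countable `𝒳`, `𝒴`. -/
noncomputable def condSmoothRenyi {X Y : Type} [Countable X] [Countable Y]
    (P : X → Y → ℝ) (α ε : ℝ) : ℝ :=
  sInf { h : ℝ | ∃ Q : X → Y → ℝ, (∀ x y, 0 ≤ Q x y ∧ Q x y ≤ P x y) ∧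
    (1 - ε ≤ ∑' y, ∑' x, Q x y) ∧ (∀ y, Summable (fun x => Q x y ^ α)) ∧
    Summable (fun y => (∑' x, Q x y ^ α) ^ (1 / α)) ∧
    h = (α / (1 - α)) * Real.log (∑' y, (∑' x, Q x y ^ α) ^ (1 / α)) }

/-- Error probability of a stochastic code `(W, ψ)` for `X` with common side
information `Y`. -/
noncomputable def codeError {X Y : Type} [Countable X] [Countable Y]
    (P : X → Y → ℝ) (W : Y → X → List Bool → ℝ) (ψ : Y → List Bool → X) : ℝ :=
  ∑' xy : X × Y, P xy.1 xy.2 * ∑' c : List Bool,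
    (if ψ xy.2 c ≠ xy.1 then W xy.2 xy.1 c else 0)

/-- Exponential moment of the codeword length (lengths in nats: `|c| log 2`). -/
noncomputable def codeMoment {X Y : Type} [Countable X] [Countable Y]
    (P : X → Y → ℝ) (W : Y → X → List Bool → ℝ) (ρ : ℝ) : ℝ :=
  ∑' xy : X × Y, P xy.1 xy.2 * ∑' c : List Bool,
    W xy.2 xy.1 c * Real.exp (ρ * (c.length : ℝ) * Real.log 2)

/-- Source-coding converse: any prefix-free code with common side information and
error probability at most `ε` satisfies `M_ρ ≥ exp(ρ H_{1/(1+ρ)}^ε(X|Y))`. -/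
theorem source_coding_converse {X Y : Type} [Countable X] [Countable Y]
    (P : X → Y → ℝ) (hP0 : ∀ x y, 0 ≤ P x y)
    (hPsum : Summable (fun xy : X × Y => P xy.1 xy.2))
    (hP1 : ∑' xy : X × Y, P xy.1 xy.2 = 1)
    (ρ : ℝ) (hρ : 0 < ρ) (ε : ℝ) (hε : ε ∈ Set.Ico (0:ℝ) 1)
    (C : Y → Set (List Bool)) (W : Y → X → List Bool → ℝ) (ψ : Y → List Bool → X)
    (hpre : ∀ y, ∀ c1 ∈ C y, ∀ c2 ∈ C y, c1 <+: c2 → c1 = c2)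
    (hW0 : ∀ y x c, 0 ≤ W y x c) (hW1 : ∀ y x, ∑' c, W y x c = 1)
    (hWsupp : ∀ y x c, W y x c ≠ 0 → c ∈ C y)
    (hMin : ∀ x y, Summable (fun c : List Bool =>
      W y x c * Real.exp (ρ * (c.length : ℝ) * Real.log 2)))
    (hMout : Summable (fun xy : X × Y => P xy.1 xy.2 * ∑' c : List Bool,
      W xy.2 xy.1 c * Real.exp (ρ * (c.length : ℝ) * Real.log 2)))
    (hpe : codeError P W ψ ≤ ε) :
    Real.exp (ρ * condSmoothRenyi P (1 / (1 + ρ)) ε) ≤ codeMoment P W ρ := by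
  unfold condSmoothRenyi
  set α : ℝ := 1 / (1 + ρ) with hαdef
  have h1ρ : (0:ℝ) < 1 + ρ := by linarith
  have hα0 : 0 < α := by rw [hαdef]; positivity
  have hα1 : α < 1 := by rw [hαdef, div_lt_one h1ρ]; linarith
  have hρα : ρ * α = 1 - α := by rw [hαdef]; field_simp; ring
  have hfrac : α / (1 - α) = 1 / ρ := by
    rw [← hρα, hαdef]; field_simp
  have hεlt : (0:ℝ) < 1 - ε := by have := hε.2; linarith
  -- basic summability of W
  have hWsum : ∀ y x, Summable (W y x) := by
    intro y x
    by_contra h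
    have := hW1 y x
    rw [tsum_eq_zero_of_not_summable h] at this
    norm_num at this
  -- the unsmoothed-at-errors subdistribution Q
  set Q : X → Y → ℝ := fun x y => P x y * ∑' c, (if ψ y c = x then W y x c else 0) with hQdef
  have hcorsum : ∀ x y, Summable (fun c => if ψ y c = x then W y x c else 0) := by
    intro x y
    apply Summable.of_nonneg_of_le _ _ (hWsum y x)
    · intro c; split <;> simp [hW0 y x c]
    · intro c; split <;> simp [hW0 y x c]
  have hcor0 : ∀ x y, 0 ≤ ∑' c, (if ψ y c = x then W y x c else 0) := by
    intro x y
    apply tsum_nonneg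
    intro c; split <;> simp [hW0 y x c]
  have hcor1 : ∀ x y, ∑' c, (if ψ y c = x then W y x c else 0) ≤ 1 := by
    intro x y
    rw [← hW1 y x]
    apply Summable.tsum_le_tsum _ (hcorsum x y) (hWsum y x)
    intro c; split <;> simp [hW0 y x c]
  have hQ0 : ∀ x y, 0 ≤ Q x y := fun x y => mul_nonneg (hP0 x y) (hcor0 x y)
  have hQleP : ∀ x y, Q x y ≤ P x y := by
    intro x y
    calc Q x y ≤ P x y * 1 := mul_le_mul_of_nonneg_left (hcor1 x y) (hP0 x y)
      _ = P x y := mul_one _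
  have hQsum : Summable (fun xy : X × Y => Q xy.1 xy.2) :=
    Summable.of_nonneg_of_le (fun xy => hQ0 xy.1 xy.2) (fun xy => hQleP xy.1 xy.2) hPsum
  -- total mass of Q
  have herrsum : ∀ x y, Summable (fun c => if ψ y c ≠ x then W y x c else 0) := by
    intro x y
    apply Summable.of_nonneg_of_le _ _ (hWsum y x)
    · intro c; split <;> simp [hW0 y x c]
    · intro c; split <;> simp [hW0 y x c]
  have herr0 : ∀ x y, 0 ≤ ∑' c, (if ψ y c ≠ x then W y x c else 0) := by
    intro x y
    apply tsum_nonneg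
    intro c; split <;> simp [hW0 y x c]
  have herr1 : ∀ x y, ∑' c, (if ψ y c ≠ x then W y x c else 0) ≤ 1 := by
    intro x y
    rw [← hW1 y x]
    apply Summable.tsum_le_tsum _ (herrsum x y) (hWsum y x)
    intro c; split <;> simp [hW0 y x c]
  have hsplit : ∀ x y, Q x y = P x y - P x y * ∑' c, (if ψ y c ≠ x then W y x c else 0) := by
    intro x y
    have hadd : (∑' c, (if ψ y c = x then W y x c else 0))
        + (∑' c, (if ψ y c ≠ x then W y x c else 0)) = 1 := by
      rw [← Summable.tsum_add (hcorsum x y) (herrsum x y), ← hW1 y x]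
      apply tsum_congr
      intro c
      by_cases hc : ψ y c = x <;> simp [hc]
    have : (∑' c, (if ψ y c = x then W y x c else 0))
        = 1 - ∑' c, (if ψ y c ≠ x then W y x c else 0) := by linarith
    rw [hQdef]
    simp only []
    rw [this]
    ring
  have hPerrsum : Summable (fun xy : X × Y =>
      P xy.1 xy.2 * ∑' c, (if ψ xy.2 c ≠ xy.1 then W xy.2 xy.1 c else 0)) := by
    apply Summable.of_nonneg_of_le _ _ hPsum
    · intro xy; exact mul_nonneg (hP0 _ _) (herr0 _ _)
    · intro xy
      calc P xy.1 xy.2 * ∑' c, (if ψ xy.2 c ≠ xy.1 then W xy.2 xy.1 c else 0)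
          ≤ P xy.1 xy.2 * 1 := mul_le_mul_of_nonneg_left (herr1 _ _) (hP0 _ _)
        _ = P xy.1 xy.2 := mul_one _
  have hQtot : (1:ℝ) - ε ≤ ∑' xy : X × Y, Q xy.1 xy.2 := by
    have heq : ∑' xy : X × Y, Q xy.1 xy.2 = 1 - codeError P W ψ := by
      have : (fun xy : X × Y => Q xy.1 xy.2) = fun xy : X × Y =>
          P xy.1 xy.2 - P xy.1 xy.2 * ∑' c, (if ψ xy.2 c ≠ xy.1 then W xy.2 xy.1 c else 0) := by
        funext xy
        exact hsplit xy.1 xy.2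
      rw [this, Summable.tsum_sub hPsum hPerrsum, hP1]
      rfl
    rw [heq]
    linarith
  -- iterated-sum facts
  obtain ⟨hQin, hQout, hQiter⟩ := iterated_of_prod Q hQ0 hQsum
  set M : X → Y → ℝ := fun x y => P x y * ∑' c : List Bool,
    W y x c * Real.exp (ρ * (c.length : ℝ) * Real.log 2) with hMdef
  have hM0 : ∀ x y, 0 ≤ M x y := by
    intro x y
    apply mul_nonneg (hP0 x y)
    apply tsum_nonneg
    intro c
    exact mul_nonneg (hW0 y x c) (Real.exp_nonneg _)
  obtain ⟨hMin', hMout', hMiter⟩ := iterated_of_prod M hM0 hMout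
  -- choice of minimal-length decodable codewords
  have hminex : ∀ x y, ∃ c : List Bool, (∃ c₀, ψ y c₀ = x ∧ W y x c₀ ≠ 0) →
      (ψ y c = x ∧ W y x c ≠ 0 ∧ ∀ c', ψ y c' = x → W y x c' ≠ 0 → c.length ≤ c'.length) := by
    intro x y
    by_cases h : ∃ c₀, ψ y c₀ = x ∧ W y x c₀ ≠ 0
    · obtain ⟨c₀, h1, h2⟩ := h
      have hT : {n : ℕ | ∃ c : List Bool, c.length = n ∧ ψ y c = x ∧ W y x c ≠ 0}.Nonempty :=
        ⟨c₀.length, c₀, rfl, h1, h2⟩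
      obtain ⟨c, hcl, hc1, hc2⟩ := Nat.sInf_mem hT
      refine ⟨c, fun _ => ⟨hc1, hc2, fun c' h1' h2' => ?_⟩⟩
      exact hcl ▸ Nat.sInf_le ⟨c', rfl, h1', h2'⟩
    · exact ⟨[], fun h' => absurd h' h⟩
  choose cw hcw using hminex
  have hQne : ∀ x y, Q x y ≠ 0 → ∃ c₀, ψ y c₀ = x ∧ W y x c₀ ≠ 0 := by
    intro x y h
    by_contra hne
    push_neg at hne
    apply h
    have hz : (fun c => if ψ y c = x then W y x c else 0) = fun _ => 0 := by
      funext c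
      by_cases hc : ψ y c = x
      · simp [hc, hne c hc]
      · simp [hc]
    rw [hQdef]
    simp only []
    rw [hz, tsum_zero, mul_zero]
  -- the per-y key estimate
  have main : ∀ y, Summable (fun x => Q x y ^ α) ∧
      (∑' x, Q x y ^ α) ^ (1/α) ≤ ∑' x, M x y := by
    intro y
    set u : X → ℝ := fun x => if Q x y ≠ 0 then
      Q x y * Real.exp (ρ * ((cw x y).length:ℝ) * Real.log 2) else 0 with hudef
    set v : X → ℝ := fun x => if Q x y ≠ 0 then ((2:ℝ)⁻¹) ^ (cw x y).length else 0 with hvdef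
    have hu0 : ∀ x, 0 ≤ u x := by
      intro x
      rw [hudef]
      simp only []
      split
      · exact mul_nonneg (hQ0 x y) (Real.exp_nonneg _)
      · exact le_rfl
    have hv0 : ∀ x, 0 ≤ v x := by
      intro x
      rw [hvdef]
      simp only []
      split
      · positivity
      · exact le_rfl
    have hcw' : ∀ x, Q x y ≠ 0 → (ψ y (cw x y) = x ∧ W y x (cw x y) ≠ 0 ∧
        ∀ c', ψ y c' = x → W y x c' ≠ 0 → (cw x y).length ≤ c'.length) :=
      fun x h => hcw x y (hQne x y h)
    -- Kraft bound for v
    have hvbound : ∀ F : Finset X, ∑ x ∈ F, v x ≤ 1 := by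
      intro F
      have h1 : ∑ x ∈ F, v x
          = ∑ x ∈ F.filter (fun x => Q x y ≠ 0), ((2:ℝ)⁻¹) ^ (cw x y).length := by
        rw [Finset.sum_filter]
      have hinj : ∀ x1 ∈ F.filter (fun x => Q x y ≠ 0), ∀ x2 ∈ F.filter (fun x => Q x y ≠ 0),
          cw x1 y = cw x2 y → x1 = x2 := by
        intro x1 hx1 x2 hx2 heq
        have e1 := (hcw' x1 (Finset.mem_filter.mp hx1).2).1
        have e2 := (hcw' x2 (Finset.mem_filter.mp hx2).2).1
        rw [← e1, ← e2, heq]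
      have h2 : ∑ x ∈ F.filter (fun x => Q x y ≠ 0), ((2:ℝ)⁻¹) ^ (cw x y).length
          = ∑ c ∈ (F.filter (fun x => Q x y ≠ 0)).image (fun x => cw x y),
              ((2:ℝ)⁻¹) ^ c.length := by
        rw [Finset.sum_image hinj]
      set G := (F.filter (fun x => Q x y ≠ 0)).image (fun x => cw x y) with hG
      have hGC : ∀ c ∈ G, c ∈ C y := by
        intro c hc
        rcases Finset.mem_image.mp hc with ⟨x, hx, rfl⟩
        exact hWsupp y x _ (hcw' x (Finset.mem_filter.mp hx).2).2.1
      have h3 : ∑ c ∈ G, ((2:ℝ)⁻¹) ^ c.length ≤ 1 := by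
        apply kraft_finset (G.sup List.length)
        · intro c1 hc1 c2 hc2 hp
          exact hpre y c1 (hGC c1 hc1) c2 (hGC c2 hc2) hp
        · intro c hc
          exact Finset.le_sup hc
      rw [h1, h2]
      exact h3
    have hvsum : Summable v := summable_of_sum_le (fun x => hv0 x) hvbound
    have hvle1 : ∑' x, v x ≤ 1 := Summable.tsum_le_of_sum_le hvsum hvbound
    -- u is dominated by M
    have huleM : ∀ x, u x ≤ M x y := by
      intro x
      rw [hudef]
      simp only []
      by_cases h : Q x y ≠ 0
      · rw [if_pos h]
        obtain ⟨hψ, hWne, hmin⟩ := hcw' x h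
        have e1 : Q x y * Real.exp (ρ * ((cw x y).length:ℝ) * Real.log 2)
            = P x y * ∑' c, (if ψ y c = x then W y x c else 0)
              * Real.exp (ρ * ((cw x y).length:ℝ) * Real.log 2) := by
          rw [hQdef]
          simp only []
          rw [tsum_mul_right]
          ring
        rw [e1, hMdef]
        simp only []
        apply mul_le_mul_of_nonneg_left _ (hP0 x y)
        apply Summable.tsum_le_tsum _ ((hcorsum x y).mul_right _) (hMin x y)
        intro c
        by_cases hc : ψ y c = x
        · rw [if_pos hc]
          by_cases hw : W y x c = 0
          · simp [hw]
          · apply mul_le_mul_of_nonneg_left _ (hW0 y x c)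
            apply Real.exp_le_exp.mpr
            have hlen : (((cw x y).length:ℝ)) ≤ (c.length:ℝ) := by
              exact_mod_cast hmin c hc hw
            have hl2 : 0 < Real.log 2 := Real.log_pos (by norm_num)
            exact mul_le_mul_of_nonneg_right
              (mul_le_mul_of_nonneg_left hlen hρ.le) hl2.le
        · rw [if_neg hc, zero_mul]
          exact mul_nonneg (hW0 y x c) (Real.exp_nonneg _)
      · rw [if_neg h]
        exact hM0 x y
    have husum : Summable u := Summable.of_nonneg_of_le hu0 huleM (hMin' y)
    have hUleM : ∑' x, u x ≤ ∑' x, M x y := Summable.tsum_le_tsum huleM husum (hMin' y)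
    -- the pointwise identity Q^α = u^α v^(1-α)
    have hQα : ∀ x, Q x y ^ α = u x ^ α * v x ^ (1-α) := by
      intro x
      rw [hudef, hvdef]
      simp only []
      by_cases h : Q x y ≠ 0
      · rw [if_pos h, if_pos h]
        have hv' : ((2:ℝ)⁻¹) ^ (cw x y).length
            = Real.exp (-(((cw x y).length:ℝ)) * Real.log 2) := by
          rw [← Real.exp_log (by norm_num : (0:ℝ) < (2:ℝ)⁻¹), ← Real.exp_nat_mul]
          congr 1
          rw [Real.log_inv]
          ring
        rw [hv']
        rw [Real.mul_rpow (hQ0 x y) (Real.exp_nonneg _), ← Real.exp_mul, ← Real.exp_mul]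
        rw [mul_assoc, ← Real.exp_add]
        have hzero : ρ * ((cw x y).length:ℝ) * Real.log 2 * α
            + -(((cw x y).length:ℝ)) * Real.log 2 * (1-α) = 0 := by
          rw [← hρα]
          ring
        rw [hzero, Real.exp_zero, mul_one]
      · have h' : Q x y = 0 := not_not.mp h
        rw [if_neg h, if_neg h, h', Real.zero_rpow hα0.ne', zero_mul]
    have hfun : (fun x => Q x y ^ α) = fun x => u x ^ α * v x ^ (1-α) := funext hQα
    obtain ⟨hsummUV, hUV⟩ := holder_tsum u v hu0 hv0 husum hvsum hα0 hα1
    have hsummQα : Summable (fun x => Q x y ^ α) := by rw [hfun]; exact hsummUV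
    refine ⟨hsummQα, ?_⟩
    have hM0y : 0 ≤ ∑' x, M x y := tsum_nonneg (fun x => hM0 x y)
    have hchain : ∑' x, Q x y ^ α ≤ (∑' x, M x y) ^ α := by
      calc ∑' x, Q x y ^ α = ∑' x, u x ^ α * v x ^ (1-α) := by rw [hfun]
        _ ≤ (∑' x, u x) ^ α * (∑' x, v x) ^ (1-α) := hUV
        _ ≤ (∑' x, u x) ^ α * 1 := by
            apply mul_le_mul_of_nonneg_left _ (Real.rpow_nonneg (tsum_nonneg hu0) α)
            exact Real.rpow_le_one (tsum_nonneg hv0) hvle1 (by linarith)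
        _ = (∑' x, u x) ^ α := mul_one _
        _ ≤ (∑' x, M x y) ^ α := Real.rpow_le_rpow (tsum_nonneg hu0) hUleM hα0.le
    have hQα0 : 0 ≤ ∑' x, Q x y ^ α := tsum_nonneg (fun x => Real.rpow_nonneg (hQ0 x y) α)
    calc (∑' x, Q x y ^ α) ^ (1/α) ≤ ((∑' x, M x y) ^ α) ^ (1/α) :=
          Real.rpow_le_rpow hQα0 hchain (by positivity)
      _ = (∑' x, M x y) ^ (α * (1/α)) := (Real.rpow_mul hM0y α (1/α)).symm
      _ = ∑' x, M x y := by
          rw [show α * (1/α) = 1 by field_simp, Real.rpow_one]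
  -- assemble
  set T : ℝ := ∑' y, (∑' x, Q x y ^ α) ^ (1/α) with hTdef
  have hrn : ∀ y, 0 ≤ (∑' x, Q x y ^ α) ^ (1/α) := by
    intro y
    exact Real.rpow_nonneg (tsum_nonneg (fun x => Real.rpow_nonneg (hQ0 x y) α)) _
  have hTsummand : Summable (fun y => (∑' x, Q x y ^ α) ^ (1/α)) :=
    Summable.of_nonneg_of_le hrn (fun y => (main y).2) hMout'
  have hTleM : T ≤ codeMoment P W ρ := by
    have : T ≤ ∑' y, ∑' x, M x y := Summable.tsum_le_tsum (fun y => (main y).2) hTsummand hMout'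
    rw [hMiter] at this
    exact this
  -- lower bound on T
  have hQT : ∀ (Q' : X → Y → ℝ), (∀ x y, 0 ≤ Q' x y ∧ Q' x y ≤ P x y) →
      (1 - ε ≤ ∑' y, ∑' x, Q' x y) → (∀ y, Summable (fun x => Q' x y ^ α)) →
      (Summable fun y => (∑' x, Q' x y ^ α) ^ (1/α)) →
      1 - ε ≤ ∑' y, (∑' x, Q' x y ^ α) ^ (1/α) := by
    intro Q' h1 h2 h3 h4
    obtain ⟨hPin, hPout, hPiter⟩ := iterated_of_prod P hP0 hPsum
    have hQ'in : ∀ y, Summable (fun x => Q' x y) := by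
      intro y
      exact Summable.of_nonneg_of_le (fun x => (h1 x y).1) (fun x => (h1 x y).2) (hPin y)
    have hyle : ∀ y, ∑' x, Q' x y ≤ (∑' x, Q' x y ^ α) ^ (1/α) := by
      intro y
      exact tsum_le_rpow_tsum_rpow _ (fun x => (h1 x y).1) (hQ'in y) hα0 hα1 (h3 y)
    have houter : Summable (fun y => ∑' x, Q' x y) := by
      apply Summable.of_nonneg_of_le _ hyle h4
      intro y
      exact tsum_nonneg (fun x => (h1 x y).1)
    calc 1 - ε ≤ ∑' y, ∑' x, Q' x y := h2
      _ ≤ ∑' y, (∑' x, Q' x y ^ α) ^ (1/α) := Summable.tsum_le_tsum hyle houter h4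
  have hQiter' : 1 - ε ≤ ∑' y, ∑' x, Q x y := by rw [hQiter]; exact hQtot
  have hT1ε : 1 - ε ≤ T := hQT Q (fun x y => ⟨hQ0 x y, hQleP x y⟩) hQiter'
    (fun y => (main y).1) hTsummand
  have hTpos : 0 < T := lt_of_lt_of_le hεlt hT1ε
  -- membership and infimum
  have hmem : (α / (1 - α)) * Real.log T ∈
      { h : ℝ | ∃ Q : X → Y → ℝ, (∀ x y, 0 ≤ Q x y ∧ Q x y ≤ P x y) ∧
        (1 - ε ≤ ∑' y, ∑' x, Q x y) ∧ (∀ y, Summable (fun x => Q x y ^ α)) ∧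
        Summable (fun y => (∑' x, Q x y ^ α) ^ (1 / α)) ∧
        h = (α / (1 - α)) * Real.log (∑' y, (∑' x, Q x y ^ α) ^ (1 / α)) } :=
    ⟨Q, fun x y => ⟨hQ0 x y, hQleP x y⟩, hQiter', fun y => (main y).1, hTsummand, rfl⟩
  have hbdd : BddBelow { h : ℝ | ∃ Q : X → Y → ℝ, (∀ x y, 0 ≤ Q x y ∧ Q x y ≤ P x y) ∧
        (1 - ε ≤ ∑' y, ∑' x, Q x y) ∧ (∀ y, Summable (fun x => Q x y ^ α)) ∧
        Summable (fun y => (∑' x, Q x y ^ α) ^ (1 / α)) ∧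
        h = (α / (1 - α)) * Real.log (∑' y, (∑' x, Q x y ^ α) ^ (1 / α)) } := by
    refine ⟨(α / (1 - α)) * Real.log (1 - ε), ?_⟩
    rintro h ⟨Q', h1, h2, h3, h4, rfl⟩
    have hT' := hQT Q' h1 h2 h3 h4
    have hlog : Real.log (1 - ε) ≤ Real.log (∑' y, (∑' x, Q' x y ^ α) ^ (1/α)) :=
      Real.log_le_log hεlt hT'
    have hcoef : 0 ≤ α / (1 - α) := by
      apply div_nonneg hα0.le
      linarith
    exact mul_le_mul_of_nonneg_left hlog hcoef
  have hinf : sInf { h : ℝ | ∃ Q : X → Y → ℝ, (∀ x y, 0 ≤ Q x y ∧ Q x y ≤ P x y) ∧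
        (1 - ε ≤ ∑' y, ∑' x, Q x y) ∧ (∀ y, Summable (fun x => Q x y ^ α)) ∧
        Summable (fun y => (∑' x, Q x y ^ α) ^ (1 / α)) ∧
        h = (α / (1 - α)) * Real.log (∑' y, (∑' x, Q x y ^ α) ^ (1 / α)) }
      ≤ (α / (1 - α)) * Real.log T := csInf_le hbdd hmem
  calc Real.exp (ρ * sInf _) ≤ Real.exp (ρ * ((α / (1 - α)) * Real.log T)) := by
        apply Real.exp_le_exp.mpr
        exact mul_le_mul_of_nonneg_left hinf hρ.le
    _ = T := by
        rw [hfrac]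
        rw [show ρ * (1 / ρ * Real.log T) = Real.log T by field_simp]
        exact Real.exp_log hTpos
    _ ≤ codeMoment P W ρ := hTleM
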